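/- arXiv:1706.03721 — 4 statements merged into one kernel-verified Lean document; each statement's English description precedes it below -/
import Mathlib

section
/- In any finite simple graph, at least half of the edges are incident to a 'good' node, where a node v is good if at least d(v)/3 of its neighbors w satisfy d(w) ≤ d(v). -/
open Finset
open scoped Classical

/-!
Let `B` be the set of bad vertices and `e(B)` the number of edges with both ends in `B`.
Each such edge has an endpoint `v` for which the other endpoint is a neighbour of degree
`≤ d(v)`, so `e(B)` is at most the number of such neighbours summed over `v ∈ B`, which is
`< ∑_{v ∈ B} d(v) / 3` by badness. Since `∑_{v ∈ B} d(v) = 2 e(B) + e(B, Bᶜ)`, this gives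
`e(B) ≤ e(B, Bᶜ)`, and every edge leaving `B` has a good endpoint.
-/

namespace SimpleGraph

variable {V : Type*} [Fintype V] (G : SimpleGraph V) [DecidableRel G.Adj] (s : Finset V)

theorem card_dart_fst_mem_eq_sum_degree :
    #{d : G.Dart | d.fst ∈ s} = ∑ v ∈ s, G.degree v := by
  refine (card_eq_sum_card_fiberwise (f := fun d : G.Dart => d.fst) (t := s)
    fun d hd => (mem_filter.1 hd).2).trans (sum_congr rfl fun v hv => ?_)
  rw [← dart_fst_fiber_card_eq_degree, filter_filter]
  congr 1
  ext d
  simp only [mem_filter, mem_univ, true_and, and_iff_right_iff_imp]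
  rintro rfl
  exact hv

theorem card_dart_fst_mem_snd_mem :
    #{d : G.Dart | d.fst ∈ s ∧ d.snd ∈ s} = 2 * #{e ∈ G.edgeFinset | ∀ v ∈ e, v ∈ s} := by
  rw [card_eq_sum_card_fiberwise (f := Dart.edge) (t := {e ∈ G.edgeFinset | ∀ v ∈ e, v ∈ s}),
    mul_comm, ← smul_eq_mul, ← sum_const]
  · refine sum_congr rfl fun e he => ?_
    rw [mem_filter, mem_edgeFinset] at he
    rw [← G.dart_edge_fiber_card e he.1, filter_filter]
    congr 1
    ext d
    simp only [mem_filter, mem_univ, true_and, and_iff_right_iff_imp]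
    rintro rfl
    exact ⟨he.2 _ (Sym2.mem_mk_left _ _), he.2 _ (Sym2.mem_mk_right _ _)⟩
  · intro d hd
    simp only [mem_coe, mem_filter, mem_univ, true_and] at hd
    refine mem_filter.2 ⟨G.mem_edgeFinset.2 d.edge_mem, fun v hv => ?_⟩
    rcases Sym2.mem_iff.1 hv with rfl | rfl
    exacts [hd.1, hd.2]

theorem card_dart_fst_mem_snd_notMem_le :
    #{d : G.Dart | d.fst ∈ s ∧ d.snd ∉ s} ≤ #{e ∈ G.edgeFinset | ∃ v ∈ e, v ∉ s} := by
  refine card_le_card_of_injOn Dart.edge (fun d hd => ?_) fun d hd d' hd' h => ?_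
  · simp only [coe_filter, mem_univ, true_and, Set.mem_ofPred_eq] at hd ⊢
    exact ⟨G.mem_edgeFinset.2 d.edge_mem, d.snd, Sym2.mem_mk_right _ _, hd.2⟩
  · simp only [coe_filter, mem_univ, true_and, Set.mem_ofPred_eq] at hd hd'
    rcases (G.dart_edge_eq_iff d d').1 h with h | rfl
    · exact h
    · exact absurd hd'.1 hd.2

theorem sum_degree_le_two_mul_card_edges_within_add :
    ∑ v ∈ s, G.degree v ≤
      2 * #{e ∈ G.edgeFinset | ∀ v ∈ e, v ∈ s} + #{e ∈ G.edgeFinset | ∃ v ∈ e, v ∉ s} := by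
  rw [← card_dart_fst_mem_eq_sum_degree, ← card_dart_fst_mem_snd_mem,
    ← card_filter_add_card_filter_not (s := {d : G.Dart | d.fst ∈ s}) (p := fun d => d.snd ∈ s),
    filter_filter, filter_filter]
  exact Nat.add_le_add_left (G.card_dart_fst_mem_snd_notMem_le s) _

theorem card_edges_within_le_sum_card_lower_neighbors :
    #{e ∈ G.edgeFinset | ∀ v ∈ e, v ∈ s} ≤
      ∑ v ∈ s, #{w ∈ G.neighborFinset v | G.degree w ≤ G.degree v} := by
  refine (card_le_card fun e he => ?_).trans (card_biUnion_le.trans <| sum_le_sum fun v _ =>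
    card_image_le (f := fun w => s(v, w)))
  induction e using Sym2.ind with
  | _ u w =>
  simp only [mem_filter, mem_edgeFinset, mem_edgeSet, Sym2.mem_iff, forall_eq_or_imp,
    forall_eq] at he
  obtain ⟨hadj, hu, hw⟩ := he
  simp only [mem_biUnion, mem_image, mem_filter, mem_neighborFinset]
  rcases le_total (G.degree u) (G.degree w) with h | h
  · exact ⟨w, hw, u, ⟨hadj.symm, h⟩, Sym2.eq_swap⟩
  · exact ⟨u, hu, w, ⟨hadj, h⟩, rfl⟩

theorem card_edges_within_le_card_edges_leaving_of_three_mul_le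
    (hs : ∀ v ∈ s, 3 * #{w ∈ G.neighborFinset v | G.degree w ≤ G.degree v} ≤ G.degree v) :
    #{e ∈ G.edgeFinset | ∀ v ∈ e, v ∈ s} ≤ #{e ∈ G.edgeFinset | ∃ v ∈ e, v ∉ s} := by
  have : 3 * #{e ∈ G.edgeFinset | ∀ v ∈ e, v ∈ s} ≤
      2 * #{e ∈ G.edgeFinset | ∀ v ∈ e, v ∈ s} + #{e ∈ G.edgeFinset | ∃ v ∈ e, v ∉ s} :=
    calc _ ≤ 3 * ∑ v ∈ s, #{w ∈ G.neighborFinset v | G.degree w ≤ G.degree v} :=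
          Nat.mul_le_mul_left _ (G.card_edges_within_le_sum_card_lower_neighbors s)
      _ = ∑ v ∈ s, 3 * #{w ∈ G.neighborFinset v | G.degree w ≤ G.degree v} := mul_sum ..
      _ ≤ ∑ v ∈ s, G.degree v := sum_le_sum hs
      _ ≤ _ := G.sum_degree_le_two_mul_card_edges_within_add s
  omega

end SimpleGraph

/-- In any finite simple graph, at least half of the edges are incident to a
`good` node, where `v` is good if at least `d(v)/3` of its neighbors `w`
satisfy `d(w) ≤ d(v)`. -/
theorem half_edges_incident_to_good_node {V : Type*} [Fintype V]
    (G : SimpleGraph V) [DecidableRel G.Adj] :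
    let good : V → Prop := fun v =>
      (G.degree v : ℝ) / 3 ≤
        ((G.neighborFinset v).filter (fun w => G.degree w ≤ G.degree v)).card
    (G.edgeFinset.card : ℝ) / 2 ≤
      (G.edgeFinset.filter (fun e => ∃ v, good v ∧ v ∈ e)).card := by
  intro good
  set bad : Finset V := {v | ¬ good v}
  have hbad : ∀ v ∈ bad,
      3 * #{w ∈ G.neighborFinset v | G.degree w ≤ G.degree v} ≤ G.degree v := by
    intro v hv
    simp only [bad, good, mem_filter, mem_univ, true_and, not_le] at hv
    exact_mod_cast (by linarith : (3 * #{w ∈ G.neighborFinset v | G.degree w ≤ G.degree v} : ℝ)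
      ≤ G.degree v)
  have hgood : {e ∈ G.edgeFinset | ∃ v, good v ∧ v ∈ e} =
      {e ∈ G.edgeFinset | ∃ v ∈ e, v ∉ bad} := by
    ext e
    simp [bad, and_comm]
  have hsplit : #{e ∈ G.edgeFinset | ∀ v ∈ e, v ∈ bad} +
      #{e ∈ G.edgeFinset | ∃ v ∈ e, v ∉ bad} = #G.edgeFinset := by
    simpa only [not_forall, exists_prop] using
      card_filter_add_card_filter_not (s := G.edgeFinset) (fun e => ∀ v ∈ e, v ∈ bad)
  have hle := G.card_edges_within_le_card_edges_leaving_of_three_mul_le bad hbad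
  rw [hgood, div_le_iff₀ two_pos]
  exact_mod_cast (by omega : #G.edgeFinset ≤ #{e ∈ G.edgeFinset | ∃ v ∈ e, v ∉ bad} * 2)
end

section
/- If X_1, ..., X_k are independent geometric random variables with parameter 1/2 (counting the number of successes before the first failure), then the probability that the maximum of X_1, ..., X_k is attained at a unique index is at least 1/3. -/
/-!
The unique-maximum event contains the disjoint union over `i` and `n` of the events "`X i = n + 1` and
`X j ≤ n` for `j ≠ i`", which by independence have total probability
`k ∑ₙ 2^{-(n+2)} q_{n+1}^{k-1}`, where `q_n = 1 - 2^{-n} = P[X < n]`. Since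
`q_{n+1} - q_n = 2^{-(n+1)}`, this is half of a right Riemann sum of `x ↦ k x^{k-1}` along the
increasing sequence `q`, so it dominates half the telescoping sum of `q_{n+1}^k - q_n^k`.
Truncating at `N = k + 1` and applying Bernoulli's inequality gives
`q_N^k / 2 ≥ (1 - k 2^{-N}) / 2 ≥ 3/8`.
-/

open MeasureTheory ProbabilityTheory Finset
open scoped ENNReal

section Estimates

variable {R : Type*} [CommRing R] [LinearOrder R] [IsStrictOrderedRing R]

lemma pow_succ_sub_pow_succ_le {a b : R} (hb : 0 ≤ b) (hba : b ≤ a) (m : ℕ) :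
    a ^ (m + 1) - b ^ (m + 1) ≤ (m + 1) * a ^ m * (a - b) := by
  have h := abs_pow_sub_pow_le a b (m + 1)
  rw [abs_of_nonneg (sub_nonneg.2 (pow_le_pow_left₀ hb hba _)), abs_of_nonneg (sub_nonneg.2 hba),
    abs_of_nonneg (hb.trans hba), abs_of_nonneg hb, max_eq_left hba, Nat.add_sub_cancel] at h
  push_cast at h
  linarith

lemma pow_succ_le_sum_mul_sub {f : ℕ → R} (hf : Monotone f) (hf0 : f 0 = 0) (m N : ℕ) :
    f N ^ (m + 1) ≤ ∑ n ∈ range N, (m + 1) * f (n + 1) ^ m * (f (n + 1) - f n) := by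
  calc f N ^ (m + 1) = ∑ n ∈ range N, (f (n + 1) ^ (m + 1) - f n ^ (m + 1)) := by
        rw [sum_range_sub (fun n => f n ^ (m + 1)), hf0, zero_pow m.succ_ne_zero, sub_zero]
    _ ≤ _ := sum_le_sum fun n _ =>
        pow_succ_sub_pow_succ_le (hf0 ▸ hf n.zero_le) (hf n.le_succ) m

end Estimates

lemma one_sub_inv_two_pow_pow_div_two_le_sum (m N : ℕ) :
    (1 - (2⁻¹ : ℝ) ^ N) ^ (m + 1) / 2 ≤
      ∑ n ∈ range N, ((m : ℝ) + 1) * 2⁻¹ ^ (n + 2) * (1 - 2⁻¹ ^ (n + 1)) ^ m := by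
  have hmono : Monotone fun n : ℕ => 1 - (2⁻¹ : ℝ) ^ n := fun a b hab =>
    sub_le_sub_left (pow_le_pow_of_le_one (by norm_num) (by norm_num) hab) 1
  rw [div_le_iff₀ two_pos, sum_mul]
  refine (pow_succ_le_sum_mul_sub hmono (by simp) m N).trans_eq (sum_congr rfl fun n _ => ?_)
  ring

lemma three_inv_le_one_sub_inv_two_pow_pow_div_two (m : ℕ) :
    (3 : ℝ)⁻¹ ≤ (1 - (2⁻¹ : ℝ) ^ (m + 2)) ^ (m + 1) / 2 := by
  have hbernoulli := one_add_mul_sub_le_pow (a := 1 - (2⁻¹ : ℝ) ^ (m + 2)) (by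
    have : (2⁻¹ : ℝ) ^ (m + 2) ≤ 1 := pow_le_one₀ (by norm_num) (by norm_num)
    linarith) (m + 1)
  have hsmall : ((m + 1 : ℕ) : ℝ) * 2⁻¹ ^ (m + 2) ≤ 4⁻¹ := by
    have : ((m + 1 : ℕ) : ℝ) ≤ 2 ^ m := by exact_mod_cast Nat.lt_two_pow_self
    calc ((m + 1 : ℕ) : ℝ) * 2⁻¹ ^ (m + 2) ≤ 2 ^ m * 2⁻¹ ^ (m + 2) := by gcongr
      _ = 4⁻¹ := by rw [pow_add, ← mul_assoc, ← mul_pow]; norm_num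
  linarith

section Probability

variable {Ω ι : Type*} [MeasurableSpace Ω] {μ : Measure Ω}

def strictMaxEvent (X : ι → Ω → ℕ) (i : ι) (a : ℕ) : Set Ω :=
  {ω | X i ω = a ∧ ∀ j ≠ i, X j ω < a}

lemma measureReal_lt_of_geometric [IsFiniteMeasure μ] {Y : Ω → ℕ} (hY : Measurable Y)
    (hgeom : ∀ j, μ {ω | Y ω = j} = (2 : ℝ≥0∞)⁻¹ ^ (j + 1)) (n : ℕ) :
    μ.real {ω | Y ω < n} = 1 - 2⁻¹ ^ n := by
  induction n with
  | zero => simp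
  | succ n ih =>
    have hunion : {ω | Y ω < n + 1} = {ω | Y ω < n} ∪ {ω | Y ω = n} := by
      ext ω; simp [le_iff_lt_or_eq]
    have hdisj : Disjoint {ω | Y ω < n} {ω | Y ω = n} :=
      Set.disjoint_left.2 fun ω (h : Y ω < n) (h' : Y ω = n) => h.ne h'
    rw [hunion, measureReal_union hdisj (hY (measurableSet_singleton n)), ih, measureReal_def,
      hgeom]
    simp [pow_succ]
    ring

lemma measureReal_strictMaxEvent [Fintype ι] [DecidableEq ι] {X : ι → Ω → ℕ}
    (hind : iIndepFun X μ) (i : ι) (a : ℕ) :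
    μ.real (strictMaxEvent X i a) =
      μ.real {ω | X i ω = a} * ∏ j ∈ univ.erase i, μ.real {ω | X j ω < a} := by
  set S : ι → Set ℕ := fun j => if j = i then {a} else Set.Iio a
  have hevent : strictMaxEvent X i a = ⋂ j, X j ⁻¹' S j := by
    ext ω
    simp only [strictMaxEvent, Set.mem_ofPred_eq, Set.mem_iInter, Set.mem_preimage, S]
    refine ⟨fun ⟨hi, hlt⟩ j => ?_,
      fun h => ⟨by simpa using h i, fun j hj => by simpa [hj] using h j⟩⟩
    split_ifs with h
    · simpa [h] using hi
    · exact hlt j h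
  have hprod := hind.meas_iInter (s := fun j => X j ⁻¹' S j) fun j => ⟨S j, .of_discrete, rfl⟩
  rw [hevent, measureReal_def, hprod, ENNReal.toReal_prod, ← mul_prod_erase univ _ (mem_univ i)]
  congr 1
  · simp only [S, if_pos rfl]
    rfl
  · refine prod_congr rfl fun j hj => ?_
    simp only [S, if_neg (ne_of_mem_erase hj)]
    rfl

lemma sum_measureReal_strictMaxEvent_le [Fintype ι] [IsFiniteMeasure μ] {X : ι → Ω → ℕ}
    (hX : ∀ i, Measurable (X i)) (s : Finset ℕ) :
    ∑ i, ∑ a ∈ s, μ.real (strictMaxEvent X i a) ≤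
      μ.real {ω | ∃ i, ∀ j, j ≠ i → X j ω < X i ω} := by
  set E : ι × ℕ → Set Ω := fun p => strictMaxEvent X p.1 p.2
  have hdisj : Set.PairwiseDisjoint ↑(univ ×ˢ s : Finset (ι × ℕ)) E := by
    rintro ⟨i, a⟩ - ⟨i', a'⟩ - hne
    refine Set.disjoint_left.2 fun ω ⟨hi, hlt⟩ ⟨hi', hlt'⟩ => hne ?_
    by_cases h : i = i'
    · subst h; simp_all
    · have := hlt i' (Ne.symm h); have := hlt' i h; simp_all; omega
  have hmeas : ∀ p ∈ univ ×ˢ s, MeasurableSet (E p) := fun p _ => by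
    simp only [E, strictMaxEvent]
    measurability
  calc ∑ i, ∑ a ∈ s, μ.real (E (i, a)) = μ.real (⋃ p ∈ univ ×ˢ s, E p) := by
        rw [measureReal_biUnion_finset hdisj hmeas, sum_product]
    _ ≤ _ := measureReal_mono fun ω hω => by
        obtain ⟨p, -, hi, hlt⟩ := Set.mem_iUnion₂.1 hω
        exact ⟨p.1, fun j hj => hi ▸ hlt j hj⟩

end Probability

/-- For `k ≥ 1` i.i.d. geometric(1/2) random variables (number of successes
before the first failure, `P[X i = j] = 2^{-(j+1)}`), the probability that the
maximum is attained at a unique index is at least `1/3`. -/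
theorem unique_max_of_iid_geom {Ω : Type*} [MeasurableSpace Ω]
    (μ : Measure Ω) [IsProbabilityMeasure μ] (k : ℕ) (hk : 1 ≤ k)
    (X : Fin k → Ω → ℕ) (hmeas : ∀ i, Measurable (X i))
    (hindep : iIndepFun X μ)
    (hgeom : ∀ i j, μ {ω | X i ω = j} = (2 : ℝ≥0∞)⁻¹ ^ (j + 1)) :
    (3 : ℝ≥0∞)⁻¹ ≤ μ {ω | ∃ i, ∀ j, j ≠ i → X j ω < X i ω} := by
  obtain ⟨m, rfl⟩ : ∃ m, k = m + 1 := ⟨k - 1, by omega⟩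
  have hterm (i : Fin (m + 1)) (n : ℕ) :
      μ.real (strictMaxEvent X i (n + 1)) = 2⁻¹ ^ (n + 2) * (1 - 2⁻¹ ^ (n + 1)) ^ m := by
    rw [measureReal_strictMaxEvent hindep, measureReal_def, hgeom,
      prod_congr rfl fun j _ => measureReal_lt_of_geometric (hmeas j) (hgeom j) (n + 1),
      prod_const, card_erase_of_mem (mem_univ i), card_univ, Fintype.card_fin]
    simp
  have hreal : (3 : ℝ)⁻¹ ≤ μ.real {ω | ∃ i, ∀ j, j ≠ i → X j ω < X i ω} := calc
    (3 : ℝ)⁻¹ ≤ (1 - (2⁻¹ : ℝ) ^ (m + 2)) ^ (m + 1) / 2 :=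
      three_inv_le_one_sub_inv_two_pow_pow_div_two m
    _ ≤ ∑ n ∈ range (m + 2), ((m : ℝ) + 1) * 2⁻¹ ^ (n + 2) * (1 - 2⁻¹ ^ (n + 1)) ^ m :=
      one_sub_inv_two_pow_pow_div_two_le_sum m (m + 2)
    _ = ∑ i, ∑ a ∈ (range (m + 2)).map (addRightEmbedding 1), μ.real (strictMaxEvent X i a) := by
      simp only [sum_map, addRightEmbedding_apply, hterm, sum_const, card_univ, Fintype.card_fin,
        nsmul_eq_mul, Nat.cast_succ, mul_sum, mul_assoc]
    _ ≤ _ := sum_measureReal_strictMaxEvent_le hmeas _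
  rw [← ofReal_measureReal, ← ENNReal.ofReal_ofNat 3, ← ENNReal.ofReal_inv_of_pos (by norm_num)]
  exact ENNReal.ofReal_le_ofReal hreal
end

section
/- For a fixed node v with m ≥ 0 surviving neighbors, each tossing i.i.d. Geom(1/2) coins, the probability that v's value is at least the maximum of its neighbors' values, multiplied by (m+1), is at most 2. Consequently, the expected number of nodes covered by v in a single tournament is at most 2. -/
open MeasureTheory ProbabilityTheory
open scoped ENNReal

/-!
Splitting on the value `k` of `X 0`, independence gives
`P[X 0 ≥ max X i] = ∑ₖ p k * F k ^ m` with `p k = 2⁻¹ ^ (k + 1)` and `F k = ∑_{j ≤ k} p j`.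
Since `p k = 2 * p (k + 1) = 2 * (F (k + 1) - F k)`, Bernoulli's inequality bounds
`(m + 1) * p k * F k ^ m` by `2 * (F (k + 1) ^ (m + 1) - F k ^ (m + 1))`, and these telescope to at
most `2` because `F ≤ 1`.
-/

open Finset in
theorem tsum_mul_sum_Iic_pow_mul_le {p : ℕ → ℝ≥0∞} {c : ℝ≥0∞}
    (hp : ∀ k, p k ≤ c * p (k + 1)) (hsum : ∑' k, p k ≤ 1) (m : ℕ) :
    (∑' k, p k * (∑ j ∈ Iic k, p j) ^ m) * (m + 1) ≤ c := by
  set a : ℕ → ℝ≥0∞ := fun k ↦ ∑ j ∈ Iic k, p j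
  have ha_le_one (k : ℕ) : a k ≤ 1 := (ENNReal.sum_le_tsum _).trans hsum
  have hstep (k : ℕ) : c * a k ^ (m + 1) + p k * a k ^ m * (m + 1) ≤ c * a (k + 1) ^ (m + 1) :=
    calc c * a k ^ (m + 1) + p k * a k ^ m * (m + 1)
        ≤ c * a k ^ (m + 1) + c * p (k + 1) * a k ^ m * (m + 1) := by gcongr; exact hp k
      _ = c * (a k ^ (m + 1) + (m + 1 : ℕ) * a k ^ (m + 1 - 1) * p (k + 1)) := by
          push_cast; ring
      _ ≤ c * (a k + p (k + 1)) ^ (m + 1) := by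
          gcongr; exact pow_add_mul_le_add_pow zero_le zero_le _
      _ = c * a (k + 1) ^ (m + 1) := by simp only [a, sum_Iic_add_zero]
  have hpartial (N : ℕ) : ∑ k ∈ range N, p k * a k ^ m * (m + 1) ≤ c * a N ^ (m + 1) := by
    induction N with
    | zero => simp
    | succ N ih =>
      rw [sum_range_succ]
      exact (add_le_add_left ih _).trans (hstep N)
  rw [← ENNReal.tsum_mul_right]
  refine ENNReal.tsum_le_of_sum_range_le fun N ↦ (hpartial N).trans ?_
  calc c * a N ^ (m + 1) ≤ c * 1 := by gcongr; exact pow_le_one₀ zero_le (ha_le_one N)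
    _ = c := mul_one c

theorem measure_forall_le_zero_eq_tsum {Ω : Type*} [MeasurableSpace Ω] {μ : Measure Ω} {m : ℕ}
    {X : Fin (m + 1) → Ω → ℕ} (hmeas : ∀ i, Measurable (X i)) (hindep : iIndepFun X μ) :
    μ {ω | ∀ i, X i ω ≤ X 0 ω} =
      ∑' k, μ (X 0 ⁻¹' {k}) * ∏ i : Fin m, μ (X i.succ ⁻¹' Set.Iic k) := by
  set s : ℕ → Fin (m + 1) → Set ℕ := fun k ↦ Fin.cons {k} fun _ ↦ Set.Iic k
  have hunion : {ω | ∀ i, X i ω ≤ X 0 ω} = ⋃ k, ⋂ i, X i ⁻¹' s k i := by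
    ext ω
    simp only [Set.mem_ofPred_eq, Set.mem_iUnion, Set.mem_iInter, Fin.forall_fin_succ, s,
      Set.mem_preimage, Fin.cons_zero, Fin.cons_succ, Set.mem_singleton_iff, Set.mem_Iic]
    exact ⟨fun h ↦ ⟨X 0 ω, rfl, h.2⟩, fun ⟨k, hk, h⟩ ↦ ⟨le_rfl, hk ▸ h⟩⟩
  have hdisj : Pairwise (Function.onFun Disjoint fun k ↦ ⋂ i, X i ⁻¹' s k i) := by
    intro k l hkl
    refine Set.disjoint_left.2 fun ω hk hl ↦ hkl ?_
    have h0k := Set.mem_iInter.1 hk 0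
    have h0l := Set.mem_iInter.1 hl 0
    simp only [s, Set.mem_preimage, Fin.cons_zero, Set.mem_singleton_iff] at h0k h0l
    exact h0k.symm.trans h0l
  rw [hunion, measure_iUnion hdisj fun k ↦
    MeasurableSet.iInter fun i ↦ hmeas i .of_discrete]
  congr 1 with k
  rw [hindep.meas_iInter fun i ↦ ⟨s k i, .of_discrete, rfl⟩, Fin.prod_univ_succ]
  rfl

theorem measure_preimage_Iic_eq_sum {Ω : Type*} [MeasurableSpace Ω] {μ : Measure Ω}
    {X : Ω → ℕ} (hX : Measurable X) (k : ℕ) :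
    μ (X ⁻¹' Set.Iic k) = ∑ j ∈ Finset.Iic k, μ (X ⁻¹' {j}) := by
  rw [sum_measure_preimage_singleton _ fun j _ ↦ hX (MeasurableSet.singleton j), Finset.coe_Iic]

theorem ge_max_prob_le_two_div_general {Ω : Type*} [MeasurableSpace Ω]
    (μ : Measure Ω) (m : ℕ)
    (X : Fin (m + 1) → Ω → ℕ) (hmeas : ∀ i, Measurable (X i))
    (hindep : iIndepFun X μ)
    (hgeom : ∀ i j, μ {ω | X i ω = j} = (2 : ℝ≥0∞)⁻¹ ^ (j + 1)) :
    μ {ω | ∀ i, X i ω ≤ X 0 ω} * (m + 1) ≤ 2 := by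
  set p : ℕ → ℝ≥0∞ := fun j ↦ 2⁻¹ ^ (j + 1)
  have hfiber (i : Fin (m + 1)) (j : ℕ) : μ (X i ⁻¹' {j}) = p j := hgeom i j
  have hp_le (k : ℕ) : p k ≤ 2 * p (k + 1) := by
    rw [show p (k + 1) = 2⁻¹ * p k from pow_succ' _ _, ← mul_assoc,
      ENNReal.mul_inv_cancel two_ne_zero ENNReal.ofNat_ne_top, one_mul]
  have hp_sum : ∑' k, p k ≤ 1 := by
    rw [ENNReal.tsum_geometric_add_one, ENNReal.one_sub_inv_two, inv_inv,
      ENNReal.inv_mul_cancel two_ne_zero ENNReal.ofNat_ne_top]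
  rw [measure_forall_le_zero_eq_tsum hmeas hindep]
  simp only [measure_preimage_Iic_eq_sum (hmeas _), hfiber, Finset.prod_const, Finset.card_univ,
    Fintype.card_fin]
  exact tsum_mul_sum_Iic_pow_mul_le hp_le hp_sum m

/-- For i.i.d. geometric(1/2) random variables `X 0, X 1, ..., X m`, the
probability that `X 0` is at least the maximum of the others, multiplied by
`m + 1`, is at most `2`. -/
theorem ge_max_prob_le_two_div {Ω : Type*} [MeasurableSpace Ω]
    (μ : Measure Ω) [IsProbabilityMeasure μ] (m : ℕ)
    (X : Fin (m + 1) → Ω → ℕ) (hmeas : ∀ i, Measurable (X i))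
    (hindep : iIndepFun X μ)
    (hgeom : ∀ i j, μ {ω | X i ω = j} = (2 : ℝ≥0∞)⁻¹ ^ (j + 1)) :
    μ {ω | ∀ i, X i ω ≤ X 0 ω} * (m + 1) ≤ 2 :=
  ge_max_prob_le_two_div_general μ m X hmeas hindep hgeom
end

section
/- For i.i.d. Geom(1/2) random variables X_0,...,X_m, P[X_0 ≥ max{X_1,...,X_m}] ≤ 2 · P[X_0 > max{X_1,...,X_m}]. -/
open MeasureTheory ProbabilityTheory
open scoped ENNReal

/-! Conditioning on `X 0 = j` and using independence,
`P[X 0 ≥ max] = ∑ⱼ 2^{-(j+1)} P[max < j + 1]` and `P[X 0 > max] = ∑ⱼ 2^{-(j+1)} P[max < j]`.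
Shifting the index, the first sum is twice the second one with its `j = 0` term dropped. -/

section

variable {Ω ι α β : Type*} [MeasurableSpace Ω] [MeasurableSpace β] {μ : Measure Ω}

lemma ProbabilityTheory.iIndepFun.indepFun_tuple_ne [Fintype ι] [DecidableEq ι]
    {X : ι → Ω → β} (hX : iIndepFun X μ) (hmeas : ∀ i, Measurable (X i)) (i : ι) :
    IndepFun (X i) (fun ω (j : {j // j ≠ i}) ↦ X j ω) μ := by
  have h := hX.indepFun_finset {i} {i}ᶜ disjoint_compl_right hmeas
  have hφ : Measurable fun (x : ({i} : Finset ι) → β) ↦ x ⟨i, Finset.mem_singleton_self i⟩ :=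
    measurable_pi_apply _
  have hψ : Measurable fun (y : ({i}ᶜ : Finset ι) → β) (j : {j // j ≠ i}) ↦
      y ⟨j, by simpa using j.2⟩ :=
    measurable_pi_lambda _ fun _ ↦ measurable_pi_apply _
  exact h.comp hφ hψ

lemma ProbabilityTheory.IndepFun.measure_mem_eq_tsum [MeasurableSpace α] [Countable α]
    [MeasurableSingletonClass α] {X : Ω → α} {Y : Ω → β}
    (hX : Measurable X) (hY : Measurable Y) (hXY : IndepFun X Y μ) {S : α → Set β}
    (hS : ∀ a, MeasurableSet (S a)) :
    μ {ω | Y ω ∈ S (X ω)} = ∑' a, μ {ω | X ω = a} * μ (Y ⁻¹' S a) := by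
  have hfiber : {ω | Y ω ∈ S (X ω)} = ⋃ a, X ⁻¹' {a} ∩ Y ⁻¹' S a := by
    ext ω; simp
  rw [hfiber, measure_iUnion]
  · exact tsum_congr fun a ↦ hXY.measure_inter_preimage_eq_mul _ _
      (measurableSet_singleton a) (hS a)
  · intro a b hab
    exact ((Set.disjoint_singleton.2 hab).preimage X).mono Set.inter_subset_left
      Set.inter_subset_left
  · exact fun a ↦ (hX (measurableSet_singleton a)).inter (hY (hS a))

end

lemma ENNReal.tsum_inv_two_pow_mul_succ_le (f : ℕ → ℝ≥0∞) :
    ∑' j, 2⁻¹ ^ (j + 1) * f (j + 1) ≤ 2 * ∑' j, 2⁻¹ ^ (j + 1) * f j := by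
  calc ∑' j, 2⁻¹ ^ (j + 1) * f (j + 1)
      = 2 * ∑' j, 2⁻¹ ^ (j + 1 + 1) * f (j + 1) := by
        rw [← ENNReal.tsum_mul_left]
        refine tsum_congr fun j ↦ ?_
        rw [pow_succ' _ (j + 1), ← mul_assoc, ← mul_assoc, ENNReal.mul_inv_cancel two_ne_zero
          ENNReal.ofNat_ne_top, one_mul]
    _ ≤ 2 * ∑' j, 2⁻¹ ^ (j + 1) * f j := by
        gcongr 2 * ?_
        exact ENNReal.tsum_comp_le_tsum_of_injective (add_left_injective 1)
          fun j ↦ 2⁻¹ ^ (j + 1) * f j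

theorem ge_max_le_two_mul_gt_max_general {Ω : Type*} [MeasurableSpace Ω]
    (μ : Measure Ω) (m : ℕ)
    (X : Fin (m + 1) → Ω → ℕ) (hmeas : ∀ i, Measurable (X i))
    (hindep : iIndepFun X μ)
    (hgeom : ∀ i j, μ {ω | X i ω = j} = (2 : ℝ≥0∞)⁻¹ ^ (j + 1)) :
    μ {ω | ∀ i, i ≠ 0 → X i ω ≤ X 0 ω} ≤
      2 * μ {ω | ∀ i, i ≠ 0 → X i ω < X 0 ω} := by
  set Y : Ω → {i : Fin (m + 1) // i ≠ 0} → ℕ := fun ω i ↦ X i ω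
  set below : ℕ → Set ({i : Fin (m + 1) // i ≠ 0} → ℕ) := fun j ↦ {y | ∀ i, y i < j}
  have hbelow (j : ℕ) : MeasurableSet (below j) :=
    measurableSet_setOfPred.2 <|
      Measurable.forall fun i ↦ (measurable_pi_apply i).lt measurable_const
  have hXY := hindep.indepFun_tuple_ne hmeas 0
  have hY : Measurable Y := by fun_prop
  have hge : μ {ω | ∀ i, i ≠ 0 → X i ω ≤ X 0 ω} =
      ∑' j, 2⁻¹ ^ (j + 1) * μ (Y ⁻¹' below (j + 1)) := by
    simpa [Y, below, hgeom, Nat.lt_succ_iff] using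
      hXY.measure_mem_eq_tsum (hmeas 0) hY (fun j ↦ hbelow (j + 1))
  have hgt : μ {ω | ∀ i, i ≠ 0 → X i ω < X 0 ω} =
      ∑' j, 2⁻¹ ^ (j + 1) * μ (Y ⁻¹' below j) := by
    simpa [Y, below, hgeom] using hXY.measure_mem_eq_tsum (hmeas 0) hY hbelow
  rw [hge, hgt]
  exact ENNReal.tsum_inv_two_pow_mul_succ_le fun j ↦ μ (Y ⁻¹' below j)

/-- For i.i.d. geometric(1/2) random variables `X 0, X 1, ..., X m`,
`P[X 0 ≥ max_{1 ≤ i ≤ m} X i] ≤ 2 · P[X 0 > max_{1 ≤ i ≤ m} X i]`. -/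
theorem ge_max_le_two_mul_gt_max {Ω : Type*} [MeasurableSpace Ω]
    (μ : Measure Ω) [IsProbabilityMeasure μ] (m : ℕ)
    (X : Fin (m + 1) → Ω → ℕ) (hmeas : ∀ i, Measurable (X i))
    (hindep : iIndepFun X μ)
    (hgeom : ∀ i j, μ {ω | X i ω = j} = (2 : ℝ≥0∞)⁻¹ ^ (j + 1)) :
    μ {ω | ∀ i, i ≠ 0 → X i ω ≤ X 0 ω} ≤
      2 * μ {ω | ∀ i, i ≠ 0 → X i ω < X 0 ω} :=
  ge_max_le_two_mul_gt_max_general μ m X hmeas hindep hgeom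
end
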